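/- For all t > 0, (1+2t)/(2t^2) · [ln Γ(t/(1+2t)) - ln Γ(t)] < 1 - ψ(t), where Γ is the gamma function and ψ the digamma function. -/

import Mathlib

open Real MeasureTheory Filter Set

/-- The digamma function ψ = Γ'/Γ, the logarithmic derivative of the Gamma function. -/
noncomputable def digamma (x : ℝ) : ℝ := deriv (fun y => Real.log (Real.Gamma y)) x

/-- The k-th polygamma function ψ^(k), the k-th derivative of the digamma function. -/
noncomputable def polygamma (k : ℕ) (x : ℝ) : ℝ := iteratedDeriv k digamma x

lemma diff_logGamma {x : ℝ} (hx : 0 < x) :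
    DifferentiableAt ℝ (fun y => Real.log (Real.Gamma y)) x := by
  exact (Real.differentiableAt_Gamma fun m => by intro h; rw [h] at hx; have := (Nat.cast_nonneg m : (0:ℝ) ≤ m); linarith).log
    (Real.Gamma_pos_of_pos hx).ne'

lemma hasDerivAt_logGamma {x : ℝ} (hx : 0 < x) :
    HasDerivAt (fun y => Real.log (Real.Gamma y)) (digamma x) x :=
  (diff_logGamma hx).hasDerivAt

lemma digamma_add_one {x : ℝ} (hx : 0 < x) : digamma (x + 1) = digamma x + 1 / x := by
  have h1 : HasDerivAt (fun y => Real.log (Real.Gamma (y + 1))) (digamma (x + 1)) x := by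
    simpa [Function.comp_def] using (hasDerivAt_logGamma (by positivity : (0:ℝ) < x + 1)).comp x
      ((hasDerivAt_id x).add_const 1)
  have h2 : HasDerivAt (fun y => Real.log (Real.Gamma y) + Real.log y)
      (digamma x + 1 / x) x := by
    simpa [one_div, Pi.add_def] using (hasDerivAt_logGamma hx).add (Real.hasDerivAt_log hx.ne')
  have heq : (fun y => Real.log (Real.Gamma (y + 1)))
      =ᶠ[nhds x] fun y => Real.log (Real.Gamma y) + Real.log y := by
    filter_upwards [eventually_gt_nhds hx] with y hy
    rw [Real.Gamma_add_one hy.ne', Real.log_mul hy.ne' (Real.Gamma_pos_of_pos hy).ne',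
      add_comm]
  exact (h1.congr_of_eventuallyEq heq.symm).unique h2

lemma digamma_mono {x y : ℝ} (hx : 0 < x) (hxy : x ≤ y) : digamma x ≤ digamma y := by
  rcases eq_or_lt_of_le hxy with rfl | h
  · exact le_rfl
  · have hc := Real.convexOn_log_Gamma
    have hxS : x ∈ Ioi (0:ℝ) := hx
    have hyS : y ∈ Ioi (0:ℝ) := lt_trans hx h
    have h1 := hc.deriv_le_slope hxS hyS h (diff_logGamma hx)
    have h2 := hc.slope_le_deriv hxS hyS h (diff_logGamma (lt_trans hx h))
    exact le_trans h1 h2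

lemma digamma_add_nat {x : ℝ} (hx : 0 < x) (N : ℕ) :
    digamma (x + N) = digamma x + ∑ m ∈ Finset.range N, 1 / (x + m) := by
  induction N with
  | zero => simp
  | succ n ih =>
    have h1 : x + (n + 1 : ℕ) = (x + n) + 1 := by push_cast; ring
    rw [h1, digamma_add_one (by positivity), ih, Finset.sum_range_succ]
    ring

/-- the per-term midpoint bound -/
lemma midpoint_bound {a b : ℝ} (ha : 1/2 < a) (hab : a ≤ b) :
    1/a - 1/b ≤ (Real.log (a + 1/2) - Real.log (a - 1/2))
      - (Real.log (b + 1/2) - Real.log (b - 1/2)) := by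
  set h : ℝ → ℝ := fun x => Real.log (x + 1/2) - Real.log (x - 1/2) - 1/x with hh
  have hder : ∀ x ∈ interior (Ioi (1/2:ℝ)), HasDerivAt h
      (1/(x+1/2) - 1/(x-1/2) + 1/x^2) x := by
    intro x hx
    rw [interior_Ioi, mem_Ioi] at hx
    have h0 : (0:ℝ) < x := by linarith
    have d1 : HasDerivAt (fun y : ℝ => Real.log (y + 1/2)) (1/(x+1/2)) x := by
      simpa [one_div, Function.comp_def] using (Real.hasDerivAt_log (by intro hc; nlinarith : x + 1/2 ≠ 0)).comp x
        ((hasDerivAt_id x).add_const (1/2))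
    have d2 : HasDerivAt (fun y : ℝ => Real.log (y - 1/2)) (1/(x-1/2)) x := by
      simpa [one_div, Function.comp_def] using (Real.hasDerivAt_log (by intro hc; nlinarith : x - 1/2 ≠ 0)).comp x
        ((hasDerivAt_id x).sub_const (1/2))
    have d3 : HasDerivAt (fun y : ℝ => 1/y) (-(1/x^2)) x := by
      simpa [one_div] using (hasDerivAt_inv h0.ne')
    exact ((d1.sub d2).sub d3).congr_deriv (by ring)
  have key : AntitoneOn h (Ioi (1/2 : ℝ)) := by
    apply antitoneOn_of_deriv_nonpos (convex_Ioi _)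
    · intro x hx
      rw [mem_Ioi] at hx
      have h0 : (0:ℝ) < x := by linarith
      apply ContinuousAt.continuousWithinAt
      have c1 : ContinuousAt (fun y:ℝ => Real.log (y+1/2)) x :=
        (Real.continuousAt_log (by intro hc; nlinarith)).comp (by fun_prop)
      have c2 : ContinuousAt (fun y:ℝ => Real.log (y-1/2)) x :=
        (Real.continuousAt_log (by intro hc; nlinarith)).comp (by fun_prop)
      have c3 : ContinuousAt (fun y:ℝ => 1/y) x := by
        simpa [one_div] using (continuousAt_inv₀ h0.ne')
      exact (c1.sub c2).sub c3
    · intro x hx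
      exact ((hder x hx).differentiableAt).differentiableWithinAt
    · intro x hx
      rw [(hder x hx).deriv]
      rw [interior_Ioi, mem_Ioi] at hx
      have h1 : (0:ℝ) < x - 1/2 := by linarith
      have h2 : (0:ℝ) < x + 1/2 := by linarith
      have h3 : (0:ℝ) < x := by linarith
      have e : 1/(x-1/2) - 1/(x+1/2) = 1/((x-1/2)*(x+1/2)) := by
        rw [div_sub_div _ _ h1.ne' h2.ne']
        congr 1
        ring
      have e2 : 1/x^2 ≤ 1/((x-1/2)*(x+1/2)) :=
        one_div_le_one_div_of_le (by positivity) (by nlinarith)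
      linarith
  have hb : b ∈ Ioi (1/2:ℝ) := lt_of_lt_of_le ha hab
  have := key (mem_Ioi.mpr ha) hb hab
  simp only [hh] at this
  linarith

lemma digamma_sub_le {u t : ℝ} (hu : 0 < u) (hut : u ≤ t) :
    digamma t - digamma u ≤ (1/u - 1/t) + (Real.log (t + 1/2) - Real.log (u + 1/2)) := by
  have ht : 0 < t := lt_of_lt_of_le hu hut
  set k : ℕ := ⌈t⌉₊ with hk
  have hCk : t ≤ u + k := le_trans (Nat.le_ceil t) (by linarith [hu, Nat.le_ceil t])
  have main : ∀ N : ℕ, digamma t - digamma u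
      ≤ ((1/u - 1/t) + (Real.log (t + 1/2) - Real.log (u + 1/2))) + k / (u + N) := by
    intro N
    have huN : (0:ℝ) < u + N := by positivity
    have hrecu := digamma_add_nat hu N
    have hrect := digamma_add_nat ht N
    have tail : digamma (t + N) ≤ digamma (u + N) + k / (u + N) := by
      have h1 : digamma (t + N) ≤ digamma ((u + N) + k) :=
        digamma_mono (by positivity) (by linarith)
      have h2 := digamma_add_nat (x := u + N) huN k
      have h3 : ∑ j ∈ Finset.range k, 1 / (u + N + (j:ℝ)) ≤ (k : ℝ) / (u + N) := by
        calc ∑ j ∈ Finset.range k, 1 / (u + N + (j:ℝ))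
            ≤ ∑ _j ∈ Finset.range k, 1 / (u + N) := by
              apply Finset.sum_le_sum
              intro j _
              exact one_div_le_one_div_of_le huN (by have := (Nat.cast_nonneg j : (0:ℝ) ≤ j); linarith)
          _ = (k:ℝ) / (u + N) := by
              rw [Finset.sum_const, Finset.card_range, nsmul_eq_mul]
              ring
      calc digamma (t + N) ≤ digamma ((u + N) + k) := h1
        _ = digamma (u + N) + ∑ j ∈ Finset.range k, 1 / (u + N + (j:ℝ)) := h2
        _ ≤ digamma (u + N) + (k:ℝ) / (u + N) := by linarith
    have sum_bound : ∑ m ∈ Finset.range N, (1/(u+(m:ℝ)) - 1/(t+(m:ℝ)))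
        ≤ (1/u - 1/t) + (Real.log (t + 1/2) - Real.log (u + 1/2)) := by
      have hnonneg1 : 1/t ≤ 1/u := one_div_le_one_div_of_le hu hut
      have hnonneg2 : Real.log (u + 1/2) ≤ Real.log (t + 1/2) :=
        Real.log_le_log (by positivity) (by linarith)
      cases N with
      | zero => simp only [Finset.sum_range_zero]; linarith
      | succ n =>
        rw [Finset.sum_range_succ']
        have step : ∑ i ∈ Finset.range n, (1/(u+((i:ℝ)+1)) - 1/(t+((i:ℝ)+1)))
            ≤ Real.log (t + 1/2) - Real.log (u + 1/2) := by
          have hterm : ∀ i ∈ Finset.range n, (1/(u+((i:ℝ)+1)) - 1/(t+((i:ℝ)+1)))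
              ≤ ((Real.log (u+((i:ℝ)+1)+1/2) - Real.log (t+((i:ℝ)+1)+1/2))
                - (Real.log (u+(i:ℝ)+1/2) - Real.log (t+(i:ℝ)+1/2))) := by
            intro i _
            have hb := midpoint_bound (a := u+((i:ℝ)+1)) (b := t+((i:ℝ)+1))
              (by have : (0:ℝ) ≤ (i:ℝ) := Nat.cast_nonneg i; linarith)
              (by linarith)
            have e1 : u+((i:ℝ)+1) - 1/2 = u+(i:ℝ)+1/2 := by ring
            have e2 : t+((i:ℝ)+1) - 1/2 = t+(i:ℝ)+1/2 := by ring
            rw [e1, e2] at hb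
            linarith
          have hsum := Finset.sum_le_sum hterm
          have htel := Finset.sum_range_sub
            (f := fun i : ℕ => Real.log (u+(i:ℝ)+1/2) - Real.log (t+(i:ℝ)+1/2)) n
          have hcast : ∀ i : ℕ, ((i:ℝ)+1) = ((i+1 : ℕ):ℝ) := by intro i; push_cast; ring
          have hle : Real.log (u+(n:ℝ)+1/2) ≤ Real.log (t+(n:ℝ)+1/2) :=
            Real.log_le_log (by positivity) (by linarith)
          calc ∑ i ∈ Finset.range n, (1/(u+((i:ℝ)+1)) - 1/(t+((i:ℝ)+1)))
              ≤ ∑ i ∈ Finset.range n, ((Real.log (u+((i:ℝ)+1)+1/2) - Real.log (t+((i:ℝ)+1)+1/2))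
                - (Real.log (u+(i:ℝ)+1/2) - Real.log (t+(i:ℝ)+1/2))) := hsum
            _ = (Real.log (u+(n:ℝ)+1/2) - Real.log (t+(n:ℝ)+1/2))
                - (Real.log (u+((0:ℕ):ℝ)+1/2) - Real.log (t+((0:ℕ):ℝ)+1/2)) := by
                  rw [← htel]
                  apply Finset.sum_congr rfl
                  intro i _
                  rw [hcast i]
            _ ≤ Real.log (t + 1/2) - Real.log (u + 1/2) := by
                  push_cast
                  rw [add_zero, add_zero]
                  linarith
        have h0 : 1/(u+((0:ℕ):ℝ)) - 1/(t+((0:ℕ):ℝ)) = 1/u - 1/t := by norm_num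
        have : ∑ i ∈ Finset.range n, (1/(u+((i:ℕ):ℝ)+1) - 1/(t+((i:ℕ):ℝ)+1))
            = ∑ i ∈ Finset.range n, (1/(u+((i:ℝ)+1)) - 1/(t+((i:ℝ)+1))) := by
          apply Finset.sum_congr rfl
          intro i _
          norm_num [add_assoc]
        push_cast
        push_cast at step this h0
        linarith [step]
    have hsplit : digamma t - digamma u = (digamma (t+N) - digamma (u+N))
        + ∑ m ∈ Finset.range N, (1/(u+(m:ℝ)) - 1/(t+(m:ℝ))) := by
      rw [hrecu, hrect, Finset.sum_sub_distrib]
      ring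
    rw [hsplit]
    have : digamma (t+N) - digamma (u+N) ≤ (k:ℝ)/(u+N) := by linarith
    linarith
  have hlim : Tendsto (fun N : ℕ => ((1/u - 1/t) + (Real.log (t + 1/2) - Real.log (u + 1/2)))
      + (k:ℝ) / (u + N)) atTop
      (nhds (((1/u - 1/t) + (Real.log (t + 1/2) - Real.log (u + 1/2))) + 0)) := by
    apply Tendsto.const_add
    have h1 : Tendsto (fun N : ℕ => u + (N:ℝ)) atTop atTop :=
      tendsto_atTop_add_const_left _ u tendsto_natCast_atTop_atTop
    have h2 := h1.inv_tendsto_atTop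
    have h3 := h2.const_mul (k:ℝ)
    simpa [div_eq_mul_inv] using h3
  rw [add_zero] at hlim
  exact ge_of_tendsto' hlim main

lemma integrable_digamma {s t : ℝ} (hs : 0 < s) (hst : s ≤ t) :
    IntervalIntegrable digamma volume s t := by
  have hm : MonotoneOn digamma (uIcc s t) := by
    intro x hx y hy hxy
    rw [uIcc_of_le hst] at hx hy
    exact digamma_mono (lt_of_lt_of_le hs hx.1) hxy
  exact hm.intervalIntegrable

lemma logGamma_sub_eq_integral {s t : ℝ} (hs : 0 < s) (hst : s ≤ t) :
    Real.log (Real.Gamma t) - Real.log (Real.Gamma s) = ∫ u in s..t, digamma u := by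
  refine (intervalIntegral.integral_eq_sub_of_hasDerivAt (f := fun y => Real.log (Real.Gamma y)) (fun x hx => ?_)
    (integrable_digamma hs hst)).symm
  rw [uIcc_of_le hst] at hx
  exact hasDerivAt_logGamma (lt_of_lt_of_le hs hx.1)

lemma G_neg {t : ℝ} (ht : 0 < t) :
    -(4*t) * Real.log (1+2*t) - 4*t + (1+4*t) * Real.log (1+4*t) < 0 := by
  set G : ℝ → ℝ := fun x => -(4*x) * Real.log (1+2*x) - 4*x + (1+4*x) * Real.log (1+4*x)
    with hG
  have hder : ∀ x ∈ interior (Ici (0:ℝ)), HasDerivAt G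
      (4*Real.log (1+4*x) - 4*Real.log (1+2*x) - 8*x/(1+2*x)) x := by
    intro x hx
    rw [interior_Ici, mem_Ioi] at hx
    have h2 : (0:ℝ) < 1+2*x := by linarith
    have h4 : (0:ℝ) < 1+4*x := by linarith
    have dL2 : HasDerivAt (fun y : ℝ => Real.log (1+2*y)) (2/(1+2*x)) x := by
      have hin : HasDerivAt (fun y : ℝ => 1+2*y) 2 x := by
        simpa using ((hasDerivAt_id x).const_mul (2:ℝ)).const_add 1
      exact hin.log h2.ne'
    have dL4 : HasDerivAt (fun y : ℝ => Real.log (1+4*y)) (4/(1+4*x)) x := by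
      have hin : HasDerivAt (fun y : ℝ => 1+4*y) 4 x := by
        simpa using ((hasDerivAt_id x).const_mul (4:ℝ)).const_add 1
      exact hin.log h4.ne'
    have dm : HasDerivAt (fun y : ℝ => -(4*y)) (-4) x := by
      simpa [Pi.neg_def] using ((hasDerivAt_id x).const_mul (4:ℝ)).neg
    have dp : HasDerivAt (fun y : ℝ => 1+4*y) 4 x := by
      simpa using ((hasDerivAt_id x).const_mul (4:ℝ)).const_add 1
    have d1 : HasDerivAt (fun y : ℝ => -(4*y) * Real.log (1+2*y))
        ((-4) * Real.log (1+2*x) + -(4*x) * (2/(1+2*x))) x := dm.mul dL2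
    have d2 : HasDerivAt (fun y : ℝ => 4*y) 4 x := by
      simpa using (hasDerivAt_id x).const_mul (4:ℝ)
    have d3 : HasDerivAt (fun y : ℝ => (1+4*y) * Real.log (1+4*y))
        (4 * Real.log (1+4*x) + (1+4*x) * (4/(1+4*x))) x := dp.mul dL4
    have := (d1.sub d2).add d3
    refine this.congr_deriv ?_
    field_simp
    ring
  have hanti : StrictAntiOn G (Ici (0:ℝ)) := by
    apply strictAntiOn_of_deriv_neg (convex_Ici _)
    · intro x hx
      rw [mem_Ici] at hx
      have h2 : (0:ℝ) < 1+2*x := by linarith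
      have h4 : (0:ℝ) < 1+4*x := by linarith
      apply ContinuousAt.continuousWithinAt
      have hin2 : ContinuousAt (fun y : ℝ => 1+2*y) x := by fun_prop
      have hin4 : ContinuousAt (fun y : ℝ => 1+4*y) x := by fun_prop
      have c2 : ContinuousAt (fun y : ℝ => Real.log (1+2*y)) x := hin2.log h2.ne'
      have c4 : ContinuousAt (fun y : ℝ => Real.log (1+4*y)) x := hin4.log h4.ne'
      exact (((continuousAt_id.const_mul _).neg.mul c2).sub
        (continuousAt_id.const_mul _)).add ((by fun_prop : ContinuousAt
          (fun y : ℝ => 1+4*y) x).mul c4)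
    · intro x hx
      rw [(hder x hx).deriv]
      rw [interior_Ici, mem_Ioi] at hx
      have h2 : (0:ℝ) < 1+2*x := by linarith
      have h4 : (0:ℝ) < 1+4*x := by linarith
      have hr : (0:ℝ) < (1+4*x)/(1+2*x) := by positivity
      have hne : (1+4*x)/(1+2*x) ≠ 1 := by
        intro hc
        rw [div_eq_one_iff_eq h2.ne'] at hc
        linarith
      have hlt := Real.log_lt_sub_one_of_pos hr hne
      rw [Real.log_div h4.ne' h2.ne'] at hlt
      have he : (1+4*x)/(1+2*x) - 1 = 2*x/(1+2*x) := by
        field_simp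
        ring
      rw [he] at hlt
      have : 4*(Real.log (1+4*x) - Real.log (1+2*x)) < 4*(2*x/(1+2*x)) := by linarith
      have he2 : 4*(2*x/(1+2*x)) = 8*x/(1+2*x) := by ring
      linarith [he2 ▸ this]
  have h0 : G 0 = 0 := by simp [hG]
  have := hanti (le_refl (0:ℝ)) (le_of_lt ht : (0:ℝ) ≤ t) ht
  rw [h0] at this
  exact this

lemma integrable_B {s t : ℝ} (hs : 0 < s) (hst : s ≤ t) :
    IntervalIntegrable (fun u => 1/u - 1/t + (Real.log (t+1/2) - Real.log (u+1/2)))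
      volume s t := by
  apply ContinuousOn.intervalIntegrable
  intro x hx
  rw [uIcc_of_le hst] at hx
  have hx0 : 0 < x := lt_of_lt_of_le hs hx.1
  apply ContinuousAt.continuousWithinAt
  have c1 : ContinuousAt (fun u : ℝ => 1/u) x := by
    simpa [one_div] using continuousAt_inv₀ hx0.ne'
  have c2 : ContinuousAt (fun u : ℝ => Real.log (u+1/2)) x :=
    ContinuousAt.log (by fun_prop) (by positivity)
  exact (c1.sub continuousAt_const).add (continuousAt_const.sub c2)

lemma integral_B {s t : ℝ} (hs : 0 < s) (hst : s ≤ t) :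
    (∫ u in s..t, (1/u - 1/t + (Real.log (t+1/2) - Real.log (u+1/2))))
      = (Real.log t - Real.log s) - (t-s)/t + (t-s)*Real.log (t+1/2)
        - ((t+1/2)*Real.log (t+1/2) - (s+1/2)*Real.log (s+1/2)) + (t-s) := by
  set Φ : ℝ → ℝ := fun u => Real.log u - u/t + u*Real.log (t+1/2)
    - (u+1/2)*Real.log (u+1/2) + u with hPhi
  have hder : ∀ x ∈ uIcc s t, HasDerivAt Φ
      (1/x - 1/t + (Real.log (t+1/2) - Real.log (x+1/2))) x := by
    intro x hx
    rw [uIcc_of_le hst] at hx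
    have hx0 : 0 < x := lt_of_lt_of_le hs hx.1
    have hx2 : (0:ℝ) < x + 1/2 := by linarith
    have d1 : HasDerivAt Real.log (1/x) x := by
      simpa [one_div] using Real.hasDerivAt_log hx0.ne'
    have d2 : HasDerivAt (fun u : ℝ => u/t) (1/t) x := by
      simpa using (hasDerivAt_id x).div_const t
    have d3 : HasDerivAt (fun u : ℝ => u*Real.log (t+1/2)) (Real.log (t+1/2)) x := by
      simpa using (hasDerivAt_id x).mul_const (Real.log (t+1/2))
    have da : HasDerivAt (fun u : ℝ => u+1/2) 1 x := (hasDerivAt_id x).add_const (1/2)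
    have db : HasDerivAt (fun u : ℝ => Real.log (u+1/2)) (1/(x+1/2)) x := by
      simpa using da.log hx2.ne'
    have d4 : HasDerivAt (fun u : ℝ => (u+1/2)*Real.log (u+1/2))
        (1 * Real.log (x+1/2) + (x+1/2) * (1/(x+1/2))) x := da.mul db
    have d5 : HasDerivAt (fun u : ℝ => u) 1 x := hasDerivAt_id x
    refine ((((d1.sub d2).add d3).sub d4).add d5).congr_deriv ?_
    have hmc : (x+1/2) * (1/(x+1/2)) = 1 := by field_simp
    rw [hmc]
    ring
  have := intervalIntegral.integral_eq_sub_of_hasDerivAt hder (integrable_B hs hst)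
  rw [this, hPhi]
  ring

theorem stmt18 (t : ℝ) (ht : 0 < t) :
    (1 + 2 * t) / (2 * t ^ 2) *
        (Real.log (Real.Gamma (t / (1 + 2 * t))) - Real.log (Real.Gamma t)) <
      1 - digamma t := by
  have hP : (0:ℝ) < 1 + 2*t := by linarith
  have h4P : (0:ℝ) < 1 + 4*t := by linarith
  set s : ℝ := t / (1 + 2*t) with hsdef
  have hs : 0 < s := by positivity
  have hst : s < t := by
    rw [hsdef, div_lt_iff₀ hP]
    nlinarith
  have hts : t - s = 2*t^2/(1+2*t) := by
    rw [hsdef]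
    field_simp
    ring
  set L2 : ℝ := Real.log (1+2*t) with hL2
  set L4 : ℝ := Real.log (1+4*t) with hL4
  -- Step 1: integral bound
  have hIB : digamma t * (t-s) - (Real.log (Real.Gamma t) - Real.log (Real.Gamma s))
      ≤ ∫ u in s..t, (1/u - 1/t + (Real.log (t+1/2) - Real.log (u+1/2))) := by
    rw [logGamma_sub_eq_integral hs hst.le]
    have hconst : digamma t * (t-s) = ∫ _u in s..t, digamma t := by
      rw [intervalIntegral.integral_const, smul_eq_mul]
      ring
    rw [hconst, ← intervalIntegral.integral_sub intervalIntegrable_const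
      (integrable_digamma hs hst.le)]
    apply intervalIntegral.integral_mono_on hst.le
      (intervalIntegrable_const.sub (integrable_digamma hs hst.le))
      (integrable_B hs hst.le)
    intro u hu
    have hu0 : 0 < u := lt_of_lt_of_le hs hu.1
    have := digamma_sub_le hu0 hu.2
    linarith
  rw [integral_B hs hst.le] at hIB
  -- Step 2: log identities
  have h1 : Real.log s = Real.log t - L2 := by
    rw [hsdef, Real.log_div ht.ne' hP.ne']
  have h2 : Real.log (t+1/2) = L2 - Real.log 2 := by
    rw [show t+1/2 = (1+2*t)/2 by ring, Real.log_div hP.ne' two_ne_zero]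
  have hs12 : s + 1/2 = (1+4*t)/(2*(1+2*t)) := by
    rw [hsdef]
    field_simp
    ring
  have h3 : Real.log (s+1/2) = L4 - Real.log 2 - L2 := by
    rw [hs12, Real.log_div h4P.ne' (by positivity), Real.log_mul two_ne_zero hP.ne']
    ring
  have hdt : (t-s)/t = 2*t/(1+2*t) := by
    rw [hts]
    field_simp
  -- Step 3: the strict elementary inequality
  have inter : L2 - (t-s)/t - (s+1/2)*(2*L2 - L4) < 0 := by
    rw [hdt, hs12]
    have e : L2 - 2*t/(1+2*t) - (1+4*t)/(2*(1+2*t))*(2*L2 - L4)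
        = (-(4*t)*L2 - 4*t + (1+4*t)*L4) / (2*(1+2*t)) := by
      field_simp
      ring
    rw [e]
    exact div_neg_of_neg_of_pos (G_neg ht) (by positivity)
  have expand : ((Real.log t - Real.log s) - (t-s)/t + (t-s)*Real.log (t+1/2)
        - ((t+1/2)*Real.log (t+1/2) - (s+1/2)*Real.log (s+1/2)) + (t-s)) - (t-s)
      = L2 - (t-s)/t - (s+1/2)*(2*L2 - L4) := by
    rw [h1, h2, h3]
    ring
  have h5 : digamma t * (t-s) - (Real.log (Real.Gamma t) - Real.log (Real.Gamma s))
      < t - s := by linarith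
  -- Step 4: algebra to the stated form
  rw [hts] at h5
  rw [div_mul_eq_mul_div, div_lt_iff₀ (by positivity : (0:ℝ) < 2*t^2)]
  have h9 := mul_lt_mul_of_pos_right h5 hP
  have e9 : (digamma t * (2*t^2/(1+2*t))
      - (Real.log (Real.Gamma t) - Real.log (Real.Gamma s))) * (1+2*t)
      = digamma t * (2*t^2) - (Real.log (Real.Gamma t) - Real.log (Real.Gamma s))*(1+2*t) := by
    field_simp
  have h10 : 2*t^2/(1+2*t)*(1+2*t) = 2*t^2 := div_mul_cancel₀ _ hP.ne'
  rw [e9, h10] at h9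
  linarith
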